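/- arXiv:1311.3866 — 3 statements merged into one kernel-verified Lean document; each statement's English description precedes it below -/
import Mathlib

section
/- Let Γ be a groupoid and X a set. A relation Φ : Γ × X ⇀ X satisfying Φ(m × id) = Φ(id × Φ) and Φ(e × id) = id has the following properties: (1) for every x ∈ X there is a unique unit e ∈ E with (x; e, x) ∈ Φ, defining a map ρ : X → E; (2) D(Φ) = {(γ,x) : d(γ) = ρ(x)}; (3) (y; γ, x) ∈ Φ implies ρ(y) = r(γ); (4) (y; γ, x) ∈ Φ iff (x; γ^{-1}, y) ∈ Φ; (5) Φ is a mapping on its domain and defines a groupoid action of Γ on X in the standard sense. -/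
/-- A groupoid on a carrier type `Γ`, with total (junk-valued off composable
pairs) multiplication, source `d`, target `r`, inverse `inv` and unit set `E`. -/
structure Gpd (Γ : Type*) where
  d : Γ → Γ
  r : Γ → Γ
  inv : Γ → Γ
  mul : Γ → Γ → Γ
  E : Set Γ
  d_mem : ∀ γ, d γ ∈ E
  r_mem : ∀ γ, r γ ∈ E
  d_unit : ∀ e ∈ E, d e = e
  r_unit : ∀ e ∈ E, r e = e
  mul_d : ∀ {γ₁ γ₂}, d γ₁ = r γ₂ → d (mul γ₁ γ₂) = d γ₂
  mul_r : ∀ {γ₁ γ₂}, d γ₁ = r γ₂ → r (mul γ₁ γ₂) = r γ₁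
  mul_assoc : ∀ {a b c}, d a = r b → d b = r c → mul (mul a b) c = mul a (mul b c)
  unit_mul : ∀ γ, mul (r γ) γ = γ
  mul_unit : ∀ γ, mul γ (d γ) = γ
  inv_inv : ∀ γ, inv (inv γ) = γ
  d_inv : ∀ γ, d (inv γ) = r γ
  r_inv : ∀ γ, r (inv γ) = d γ
  mul_inv : ∀ γ, mul γ (inv γ) = r γ
  inv_mul : ∀ γ, mul (inv γ) γ = d γ

/-- Composition of relations: a relation `X ⇀ Y` is a `Y → X → Prop`. -/
def RelComp {X Y Z : Type*} (s : Z → Y → Prop) (r : Y → X → Prop) : Z → X → Prop :=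
  fun z x => ∃ y, s z y ∧ r y x

/-- Cartesian product of relations. -/
def RelProd {X Y X' Y' : Type*} (h : Y → X → Prop) (h' : Y' → X' → Prop) :
    Y × Y' → X × X' → Prop :=
  fun p q => h p.1 q.1 ∧ h' p.2 q.2

/-- The multiplication relation `m : Γ × Γ ⇀ Γ` of a groupoid. -/
def mRel {Γ : Type*} (G : Gpd Γ) : Γ → Γ × Γ → Prop :=
  fun c p => G.d p.1 = G.r p.2 ∧ c = G.mul p.1 p.2

/-- The inverse relation `s : Γ ⇀ Γ` of a groupoid. -/
def sRel {Γ : Type*} (G : Gpd Γ) : Γ → Γ → Prop := fun a b => a = G.inv b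

/-- The unit relation `e : {1} ⇀ Γ` of a groupoid. -/
def eRel {Γ : Type*} (G : Gpd Γ) : Γ → Unit → Prop := fun a _ => a ∈ G.E

/-- A Zakrzewski morphism `h : Γ ⇀ Δ` is a relation (a subset of `Δ × Γ`) with
`h∘m = m₁∘(h×h)`, `h∘s = s₁∘h`, `h∘e = e₁`. -/
def IsZMorphism {Γ Δ : Type*} (G : Gpd Γ) (D : Gpd Δ) (h : Δ → Γ → Prop) : Prop :=
  RelComp h (mRel G) = RelComp (mRel D) (RelProd h h) ∧
  RelComp h (sRel G) = RelComp (sRel D) h ∧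
  RelComp h (eRel G) = eRel D

/-- A subgroupoid: closed under inverse and composition. -/
def IsSubgroupoid {Γ : Type*} (G : Gpd Γ) (A : Set Γ) : Prop :=
  (∀ g ∈ A, G.inv g ∈ A) ∧
  (∀ g₁ g₂, g₁ ∈ A → g₂ ∈ A → G.d g₁ = G.r g₂ → G.mul g₁ g₂ ∈ A)

/-- Transitivity: any two units are connected by an arrow. -/
def IsTransitiveGpd {Γ : Type*} (G : Gpd Γ) : Prop :=
  ∀ e₁ ∈ G.E, ∀ e₂ ∈ G.E, ∃ γ, G.r γ = e₁ ∧ G.d γ = e₂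

/-- The orbit relation on units. -/
def OrbitRel {Γ : Type*} (G : Gpd Γ) (e₁ e₂ : Γ) : Prop :=
  ∃ γ, G.r γ = e₁ ∧ G.d γ = e₂

/-- Setwise product of subsets of a groupoid. -/
def setMul {Γ : Type*} (G : Gpd Γ) (A B : Set Γ) : Set Γ :=
  {c | ∃ a ∈ A, ∃ b ∈ B, G.d a = G.r b ∧ c = G.mul a b}

/-- Setwise inverse. -/
def setInv {Γ : Type*} (G : Gpd Γ) (A : Set Γ) : Set Γ := G.inv '' A

/-- A bisection: a subset on which both source and target restrict to
bijections onto the unit set. -/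
def IsBisection {Γ : Type*} (G : Gpd Γ) (B : Set Γ) : Prop :=
  Set.BijOn G.d B G.E ∧ Set.BijOn G.r B G.E

/-- Image of a set under a relation `h : Γ ⇀ Δ`. -/
def relImage {Γ Δ : Type*} (h : Δ → Γ → Prop) (A : Set Γ) : Set Δ :=
  {δ | ∃ γ ∈ A, h δ γ}

/-- Kernel of a Zakrzewski morphism. -/
def kerSet {Γ Δ : Type*} (D : Gpd Δ) (h : Δ → Γ → Prop) : Set Γ :=
  {γ | (∃ δ, h δ γ) ∧ ∀ δ, h δ γ → δ ∈ D.E}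

/-- A functor between groupoids (preserving composability). -/
def IsFunctor {Γ Δ : Type*} (G : Gpd Γ) (D : Gpd Δ) (Φ : Γ → Δ) : Prop :=
  (∀ e ∈ G.E, Φ e ∈ D.E) ∧
  (∀ γ, Φ (G.inv γ) = D.inv (Φ γ)) ∧
  (∀ γ₁ γ₂, G.d γ₁ = G.r γ₂ →
    D.d (Φ γ₁) = D.r (Φ γ₂) ∧ Φ (G.mul γ₁ γ₂) = D.mul (Φ γ₁) (Φ γ₂))

/-- The pair groupoid on a set `X`. -/
def pairGpd (X : Type*) : Gpd (X × X) where
  d p := (p.2, p.2)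
  r p := (p.1, p.1)
  inv p := (p.2, p.1)
  mul p q := (p.1, q.2)
  E := {p | p.1 = p.2}
  d_mem _ := rfl
  r_mem _ := rfl
  d_unit e he := by obtain ⟨a, b⟩ := e; simp_all [Set.mem_setOf_eq]
  r_unit e he := by obtain ⟨a, b⟩ := e; simp_all [Set.mem_setOf_eq]
  mul_d _ := rfl
  mul_r _ := rfl
  mul_assoc _ _ := rfl
  unit_mul _ := rfl
  mul_unit _ := rfl
  inv_inv _ := rfl
  d_inv _ := rfl
  r_inv _ := rfl
  mul_inv _ := rfl
  inv_mul _ := rfl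

/-- A group viewed as a groupoid with a single unit. -/
def groupGpd (G : Type*) [Group G] : Gpd G where
  d _ := 1
  r _ := 1
  inv g := g⁻¹
  mul g h := g * h
  E := {1}
  d_unit _ he := he.symm
  r_unit _ he := he.symm
  d_mem _ := rfl
  r_mem _ := rfl
  mul_d _ := rfl
  mul_r _ := rfl
  mul_assoc _ _ := mul_assoc _ _ _
  unit_mul := one_mul
  mul_unit := mul_one
  inv_inv := inv_inv
  d_inv _ := rfl
  r_inv _ := rfl
  mul_inv := mul_inv_cancel
  inv_mul := inv_mul_cancel

/-- The product groupoid `E × G × E` of a group and a pair groupoid. -/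
def prodGpd (E G : Type*) [Group G] : Gpd (E × G × E) where
  d p := (p.2.2, 1, p.2.2)
  r p := (p.1, 1, p.1)
  inv p := (p.2.2, p.2.1⁻¹, p.1)
  mul p q := (p.1, p.2.1 * q.2.1, q.2.2)
  E := {p | p.1 = p.2.2 ∧ p.2.1 = 1}
  d_mem _ := ⟨rfl, rfl⟩
  r_mem _ := ⟨rfl, rfl⟩
  d_unit e he := by obtain ⟨a, g, b⟩ := e; obtain ⟨h1, h2⟩ := he; simp_all
  r_unit e he := by obtain ⟨a, g, b⟩ := e; obtain ⟨h1, h2⟩ := he; simp_all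
  mul_d _ := rfl
  mul_r _ := rfl
  mul_assoc _ _ := by simp [mul_assoc]
  unit_mul γ := by simp
  mul_unit γ := by simp
  inv_inv γ := by simp
  d_inv _ := rfl
  r_inv _ := rfl
  mul_inv γ := by simp
  inv_mul γ := by simp

/-- A relational action of a groupoid `Γ` on a set `X`: a relation
`Φ : Γ × X ⇀ X` with `Φ(m × id) = Φ(id × Φ)` (written over the associated
triples) and `Φ(e × id) = id`. -/
def IsActionRel {Γ X : Type*} (G : Gpd Γ) (Φ : X → Γ × X → Prop) : Prop :=
  (∀ (z : X) (γ₁ γ₂ : Γ) (x : X),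
    (∃ c, mRel G c (γ₁, γ₂) ∧ Φ z (c, x)) ↔ (∃ y, Φ y (γ₂, x) ∧ Φ z (γ₁, y))) ∧
  (∀ (z x : X), (∃ e ∈ G.E, Φ z (e, x)) ↔ z = x)

/-- Equivalence of the relational definition of a groupoid action with the
standard one: such a relation determines an anchor map `ρ : X → E`, has domain
`{(γ,x) : d γ = ρ x}`, satisfies `ρ(γx) = r γ`, is compatible with the
inverse, and is a mapping on its domain which is an action in the standard
sense. -/
theorem stmt_16 {Γ X : Type*} (G : Gpd Γ) (Φ : X → Γ × X → Prop)
    (hΦ : IsActionRel G Φ) :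
    ∃ ρ : X → Γ,
      (∀ x, ρ x ∈ G.E ∧ Φ x (ρ x, x) ∧ ∀ e ∈ G.E, Φ x (e, x) → e = ρ x) ∧
      (∀ γ x, (∃ y, Φ y (γ, x)) ↔ G.d γ = ρ x) ∧
      (∀ y γ x, Φ y (γ, x) → ρ y = G.r γ) ∧
      (∀ y γ x, Φ y (γ, x) ↔ Φ x (G.inv γ, y)) ∧
      (∀ γ x y₁ y₂, Φ y₁ (γ, x) → Φ y₂ (γ, x) → y₁ = y₂) ∧
      (∀ γ₁ γ₂ x y z, G.d γ₁ = G.r γ₂ → Φ y (γ₂, x) →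
        (Φ z (γ₁, y) ↔ Φ z (G.mul γ₁ γ₂, x))) := by
  obtain ⟨assoc, unit⟩ := hΦ
  have hex : ∀ x : X, ∃ e, e ∈ G.E ∧ Φ x (e, x) := by
    intro x
    obtain ⟨e, he, hΦe⟩ := (unit x x).mpr rfl
    exact ⟨e, he, hΦe⟩
  set ρ : X → Γ := fun x => (hex x).choose with hρdef
  have hρE : ∀ x, ρ x ∈ G.E := fun x => (hex x).choose_spec.1
  have hρΦ : ∀ x, Φ x (ρ x, x) := fun x => (hex x).choose_spec.2
  have huniq : ∀ (x : X) (e₁ e₂ : Γ), e₁ ∈ G.E → e₂ ∈ G.E →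
      Φ x (e₁, x) → Φ x (e₂, x) → e₁ = e₂ := by
    intro x e₁ e₂ h1 h2 p1 p2
    obtain ⟨c, ⟨hd, -⟩, -⟩ := (assoc x e₁ e₂ x).mpr ⟨x, p2, p1⟩
    rwa [G.d_unit e₁ h1, G.r_unit e₂ h2] at hd
  have hdom_fwd : ∀ y γ x, Φ y (γ, x) → G.d γ = ρ x := by
    intro y γ x h
    obtain ⟨c, ⟨hd, -⟩, -⟩ := (assoc y γ (ρ x) x).mpr ⟨x, hρΦ x, h⟩
    rwa [G.r_unit _ (hρE x)] at hd
  have hdom_bwd : ∀ γ x, G.d γ = ρ x → ∃ y, Φ y (γ, x) ∧ Φ x (G.inv γ, y) := by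
    intro γ x hd
    refine (assoc x (G.inv γ) γ x).mp ⟨G.mul (G.inv γ) γ, ⟨G.d_inv γ, rfl⟩, ?_⟩
    rw [G.inv_mul, hd]
    exact hρΦ x
  have key : ∀ y γ x, Φ y (γ, x) → Φ x (G.inv γ, y) := by
    intro y γ x h
    obtain ⟨y', hy', hinv⟩ := hdom_bwd γ x (hdom_fwd y γ x h)
    obtain ⟨c, ⟨-, hc⟩, hΦc⟩ := (assoc y γ (G.inv γ) y').mpr ⟨x, hinv, h⟩
    rw [G.mul_inv] at hc
    subst hc
    have hyy : y = y' := (unit y y').mp ⟨G.r γ, G.r_mem γ, hΦc⟩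
    rw [hyy]; exact hinv
  have huniqy : ∀ γ x y₁ y₂, Φ y₁ (γ, x) → Φ y₂ (γ, x) → y₁ = y₂ := by
    intro γ x y₁ y₂ h1 h2
    obtain ⟨c, ⟨-, hc⟩, hΦc⟩ := (assoc y₂ γ (G.inv γ) y₁).mpr ⟨x, key y₁ γ x h1, h2⟩
    rw [G.mul_inv] at hc
    subst hc
    exact ((unit y₂ y₁).mp ⟨G.r γ, G.r_mem γ, hΦc⟩).symm
  have hρr : ∀ y γ x, Φ y (γ, x) → ρ y = G.r γ := by
    intro y γ x h
    obtain ⟨c, ⟨-, hc⟩, hΦc⟩ := (assoc y γ (G.inv γ) y).mpr ⟨x, key y γ x h, h⟩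
    rw [G.mul_inv] at hc
    subst hc
    exact huniq y (ρ y) (G.r γ) (hρE y) (G.r_mem γ) (hρΦ y) hΦc
  refine ⟨ρ, ?_, ?_, hρr, ?_, huniqy, ?_⟩
  · intro x
    exact ⟨hρE x, hρΦ x, fun e he hΦe => huniq x e (ρ x) he (hρE x) hΦe (hρΦ x)⟩
  · intro γ x
    constructor
    · rintro ⟨y, hy⟩; exact hdom_fwd y γ x hy
    · intro hd
      obtain ⟨y, hy, -⟩ := hdom_bwd γ x hd
      exact ⟨y, hy⟩
  · intro y γ x
    constructor
    · exact key y γ x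
    · intro h
      have := key x (G.inv γ) y h
      rwa [G.inv_inv] at this
  · intro γ₁ γ₂ x y z hd h2
    constructor
    · intro h1
      obtain ⟨c, ⟨-, hc⟩, hΦc⟩ := (assoc z γ₁ γ₂ x).mpr ⟨y, h2, h1⟩
      rwa [hc] at hΦc
    · intro h
      obtain ⟨y', h1', h2'⟩ := (assoc z γ₁ γ₂ x).mp ⟨G.mul γ₁ γ₂, ⟨hd, rfl⟩, h⟩
      rwa [huniqy γ₂ x y' y h1' h2] at h2'
end

section
/- Let Γ, Δ be groupoids and Φ : Γ × Δ ⇀ Δ an action of Γ on Δ (as a relation, i.e., Φ(m_Γ × id) = Φ(id × Φ), Φ(e_Γ × id) = id) that commutes with right multiplication in Δ: Φ(id × m_Δ) = m_Δ(Φ × id). Then h := {(Φ(γ,δ)·δ^{-1}, γ) : (γ,δ) ∈ D(Φ)} is a Zakrzewski morphism Γ ⇀ Δ. -/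
section Stmt17Aux

variable {Γ Δ : Type*}

private lemma stmt17_inv_unit (G : Gpd Γ) {e : Γ} (he : e ∈ G.E) : G.inv e = e := by
  have h1 := G.mul_inv e
  have h2 := G.unit_mul (G.inv e)
  rw [G.r_inv, G.d_unit e he] at h2
  rw [h2, G.r_unit e he] at h1
  exact h1

private lemma stmt17_dA (G : Gpd Γ) (D : Gpd Δ) (Φ : Δ → Γ × Δ → Prop)
    (hcomm : ∀ (δ' : Δ) (γ : Γ) (δ₂ δ₃ : Δ),
      (∃ c, mRel D c (δ₂, δ₃) ∧ Φ δ' (γ, c)) ↔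
      (∃ z, Φ z (γ, δ₂) ∧ mRel D δ' (z, δ₃)))
    {δ' δ : Δ} {γ : Γ} (h : Φ δ' (γ, δ)) : D.d δ' = D.d δ := by
  obtain ⟨z, hz, hd, heq⟩ := (hcomm δ' γ δ (D.d δ)).mp
    ⟨δ, ⟨(D.r_unit _ (D.d_mem δ)).symm, (D.mul_unit δ).symm⟩, h⟩
  rw [D.r_unit _ (D.d_mem δ)] at hd
  have hz' : δ' = z := by rw [heq, ← hd, D.mul_unit]
  rw [hz', hd]

private lemma stmt17_C (G : Gpd Γ) (Φ : Δ → Γ × Δ → Prop) (hΦ : IsActionRel G Φ)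
    {z x : Δ} {γ : Γ} (h : Φ z (γ, x)) : Φ x (G.inv γ, z) := by
  obtain ⟨hact, hunit⟩ := hΦ
  obtain ⟨y, hy, hzy⟩ := (hact z (G.r γ) γ x).mp
    ⟨γ, ⟨G.d_unit _ (G.r_mem γ), (G.unit_mul γ).symm⟩, h⟩
  have hzy' : z = y := (hunit z y).mp ⟨G.r γ, G.r_mem γ, hzy⟩
  have h1 : Φ z (G.r γ, z) := by rw [← hzy'] at hzy; exact hzy
  obtain ⟨w, hw, hzw⟩ := (hact z γ (G.inv γ) z).mp
    ⟨G.r γ, ⟨(G.r_inv γ).symm, (G.mul_inv γ).symm⟩, h1⟩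
  obtain ⟨c, ⟨hc1, hc2⟩, hcx⟩ := (hact w (G.inv γ) γ x).mpr ⟨z, h, hw⟩
  have hcE : c ∈ G.E := by rw [hc2, G.inv_mul]; exact G.d_mem γ
  have hwx : w = x := (hunit w x).mp ⟨c, hcE, hcx⟩
  rw [← hwx]; exact hw

private lemma stmt17_hEquiv (G : Gpd Γ) (D : Gpd Δ) (Φ : Δ → Γ × Δ → Prop)
    (hcomm : ∀ (δ' : Δ) (γ : Γ) (δ₂ δ₃ : Δ),
      (∃ c, mRel D c (δ₂, δ₃) ∧ Φ δ' (γ, c)) ↔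
      (∃ z, Φ z (γ, δ₂) ∧ mRel D δ' (z, δ₃)))
    (η : Δ) (γ : Γ) :
    (∃ δ δ', Φ δ' (γ, δ) ∧ η = D.mul δ' (D.inv δ)) ↔ (∃ e ∈ D.E, Φ η (γ, e)) := by
  constructor
  · rintro ⟨δ, δ', hΦd, heq⟩
    have hd := stmt17_dA G D Φ hcomm hΦd
    obtain ⟨c, ⟨hc1, hc2⟩, hΦc⟩ := (hcomm η γ δ (D.inv δ)).mpr
      ⟨δ', hΦd, ⟨by rw [D.r_inv]; exact hd, heq⟩⟩
    rw [D.mul_inv] at hc2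
    exact ⟨c, hc2 ▸ D.r_mem δ, hΦc⟩
  · rintro ⟨e, he, hΦe⟩
    refine ⟨e, η, hΦe, ?_⟩
    have hde : e = D.d η := by rw [stmt17_dA G D Φ hcomm hΦe, D.d_unit e he]
    rw [stmt17_inv_unit D he, hde, D.mul_unit]

private lemma stmt17_F (G : Gpd Γ) (D : Gpd Δ) (Φ : Δ → Γ × Δ → Prop)
    (hΦ : IsActionRel G Φ)
    (hcomm : ∀ (δ' : Δ) (γ : Γ) (δ₂ δ₃ : Δ),
      (∃ c, mRel D c (δ₂, δ₃) ∧ Φ δ' (γ, c)) ↔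
      (∃ z, Φ z (γ, δ₂) ∧ mRel D δ' (z, δ₃)))
    {η : Δ} {γ : Γ} (h : ∃ e ∈ D.E, Φ η (γ, e)) :
    ∃ e ∈ D.E, Φ (D.inv η) (G.inv γ, e) := by
  obtain ⟨e, he, hΦe⟩ := h
  have hce : Φ e (G.inv γ, η) := stmt17_C G Φ hΦ hΦe
  have hde : D.d e = D.d η := stmt17_dA G D Φ hcomm hce
  have heu : e = D.r (D.inv η) := by rw [D.r_inv, ← hde, D.d_unit e he]
  obtain ⟨c, ⟨hc1, hc2⟩, hres⟩ := (hcomm (D.inv η) (G.inv γ) η (D.inv η)).mpr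
    ⟨e, hce, ⟨by rw [← heu, D.d_unit e he, heu, D.r_inv, ← hde, D.d_unit e he], by
      rw [heu, D.unit_mul]⟩⟩
  rw [D.mul_inv] at hc2
  exact ⟨c, hc2 ▸ D.r_mem η, hres⟩

end Stmt17Aux

/-- An action of `Γ` on a groupoid `Δ` commuting with right multiplication in
`Δ` (`Φ(id × m_Δ) = m_Δ(Φ × id)`) defines a Zakrzewski morphism
`h = {(Φ(γ,δ)·δ⁻¹, γ)}` from `Γ` to `Δ`. -/
theorem stmt_17 {Γ Δ : Type*} (G : Gpd Γ) (D : Gpd Δ)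
    (Φ : Δ → Γ × Δ → Prop) (hΦ : IsActionRel G Φ)
    (hcomm : ∀ (δ' : Δ) (γ : Γ) (δ₂ δ₃ : Δ),
      (∃ c, mRel D c (δ₂, δ₃) ∧ Φ δ' (γ, c)) ↔
      (∃ z, Φ z (γ, δ₂) ∧ mRel D δ' (z, δ₃))) :
    IsZMorphism G D
      (fun η γ => ∃ δ δ', Φ δ' (γ, δ) ∧ η = D.mul δ' (D.inv δ)) := by
  
  obtain ⟨hact, hunit⟩ := hΦ
  have hEq := stmt17_hEquiv G D Φ hcomm
  refine ⟨?_, ?_, ?_⟩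
  · funext η p
    obtain ⟨γ₁, γ₂⟩ := p
    apply propext
    constructor
    · rintro ⟨c, hh, hdr, hceq⟩
      subst hceq
      obtain ⟨e, he, hΦe⟩ := (hEq η (G.mul γ₁ γ₂)).mp hh
      obtain ⟨y, hy, hηy⟩ := (hact η γ₁ γ₂ e).mp ⟨G.mul γ₁ γ₂, ⟨hdr, rfl⟩, hΦe⟩
      obtain ⟨z, hz, hdz, hηeq⟩ := (hcomm η γ₁ (D.r y) y).mp
        ⟨y, ⟨D.d_unit _ (D.r_mem y), (D.unit_mul y).symm⟩, hηy⟩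
      exact ⟨(z, y), ⟨hdz, hηeq⟩,
        (hEq z γ₁).mpr ⟨D.r y, D.r_mem y, hz⟩, (hEq y γ₂).mpr ⟨e, he, hy⟩⟩
    · rintro ⟨⟨η₁, η₂⟩, ⟨hd12, hηeq⟩, hh1, hh2⟩
      obtain ⟨e₁, he₁, hΦ1⟩ := (hEq η₁ γ₁).mp hh1
      obtain ⟨e₂, he₂, hΦ2⟩ := (hEq η₂ γ₂).mp hh2
      obtain ⟨c, ⟨hc1, hc2⟩, hΦc⟩ := (hcomm η γ₁ e₁ η₂).mpr ⟨η₁, hΦ1, ⟨hd12, hηeq⟩⟩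
      have he1r : e₁ = D.r η₂ := by
        rw [← D.d_unit e₁ he₁, ← stmt17_dA G D Φ hcomm hΦ1, hd12]
      have hcη₂ : c = η₂ := by rw [hc2, he1r, D.unit_mul]
      rw [hcη₂] at hΦc
      obtain ⟨c', ⟨hdr, hc'⟩, hΦ'⟩ := (hact η γ₁ γ₂ e₂).mpr ⟨η₂, hΦ2, hΦc⟩
      exact ⟨G.mul γ₁ γ₂, (hEq η (G.mul γ₁ γ₂)).mpr ⟨e₂, he₂, hc' ▸ hΦ'⟩, hdr, rfl⟩
  · funext η γ
    apply propext
    constructor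
    · rintro ⟨b, hh, hb⟩
      subst hb
      have h2 := stmt17_F G D Φ ⟨hact, hunit⟩ hcomm ((hEq η (G.inv γ)).mp hh)
      rw [G.inv_inv] at h2
      exact ⟨D.inv η, (D.inv_inv η).symm, (hEq (D.inv η) γ).mpr h2⟩
    · rintro ⟨η', heq, hh⟩
      have h2 := stmt17_F G D Φ ⟨hact, hunit⟩ hcomm ((hEq η' γ).mp hh)
      rw [← heq] at h2
      exact ⟨G.inv γ, (hEq η (G.inv γ)).mpr h2, rfl⟩
  · funext η u
    apply propext
    constructor
    · rintro ⟨γ, hh, hγE⟩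
      obtain ⟨e, he, hΦe⟩ := (hEq η γ).mp hh
      have : η = e := (hunit η e).mp ⟨γ, hγE, hΦe⟩
      exact this ▸ he
    · intro hη
      obtain ⟨e', he', hΦe⟩ := (hunit η η).mpr rfl
      exact ⟨e', (hEq η e').mpr ⟨η, hη, hΦe⟩, he'⟩
end

section
/- Let Γ = E × G × E be a transitive groupoid (G a group) and Φ : Γ × Z ⇀ Z an action with base map ρ : Z → E. Fix z₀ ∈ Z, set e₀ := ρ(z₀) and Z̃ := ρ^{-1}(e₀), with G acting on Z̃ by g·z̃ := Φ((e₀,g,e₀), z̃). Then the map Ψ : E × Z̃ → Z defined by Ψ(e, z̃) = Φ((e, e_G, e₀), z̃) is a bijection, and it is equivariant: Φ(id × Ψ) = Ψ∘Φ̃, where Φ̃ is the induced action of Γ on E × Z̃ given by (e₁,g,e₂)·(e₂,z̃) = (e₁, g·z̃). -/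
section ActHelpers

variable {E G Z : Type*} [Group G] {Φ : Z → (E × G × E) × Z → Prop}
  (hΦ : IsActionRel (prodGpd E G) Φ) {ρ : Z → E} (hρ : ∀ z, Φ z ((ρ z, 1, ρ z), z))

include hΦ hρ

theorem act_unit_eq {t x : Z} {c : E} (h : Φ t ((c, 1, c), x)) : t = x :=
  (hΦ.2 t x).mp ⟨(c, 1, c), ⟨rfl, rfl⟩, h⟩

theorem act_tgt {z x : Z} {a : E} {g : G} {b : E} (h : Φ z ((a, g, b), x)) : ρ x = b := by
  obtain ⟨c, ⟨hd, _⟩, _⟩ := (hΦ.1 z (a, g, b) (ρ x, 1, ρ x) x).mpr ⟨x, hρ x, h⟩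
  exact (congrArg Prod.fst hd).symm

theorem act_src {z x : Z} {a : E} {g : G} {b : E} (h : Φ z ((a, g, b), x)) : ρ z = a := by
  obtain ⟨c, ⟨hd, _⟩, _⟩ := (hΦ.1 z (ρ z, 1, ρ z) (a, g, b) x).mpr ⟨z, h, hρ z⟩
  exact congrArg Prod.fst hd

theorem act_exists (a : E) (g : G) (x : Z) : ∃ z, Φ z ((a, g, ρ x), x) := by
  have h1 : Φ x ((ρ x, (g⁻¹ * g : G), ρ x), x) := by rw [inv_mul_cancel]; exact hρ x
  obtain ⟨y, hy, -⟩ := (hΦ.1 x (ρ x, g⁻¹, a) (a, g, ρ x) x).mp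
    ⟨(ρ x, g⁻¹ * g, ρ x), ⟨rfl, rfl⟩, h1⟩
  exact ⟨y, hy⟩

theorem act_inv {z x : Z} {a : E} {g : G} {b : E} (h : Φ z ((a, g, b), x)) :
    Φ x ((b, g⁻¹, a), z) := by
  have ha : ρ z = a := act_src hΦ hρ h
  have h1 : Φ z ((a, (g * g⁻¹ : G), a), z) := by rw [mul_inv_cancel, ← ha]; exact hρ z
  obtain ⟨y, hy1, hy2⟩ :=
    (hΦ.1 z (a, g, b) (b, g⁻¹, a) z).mp ⟨(a, g * g⁻¹, a), ⟨rfl, rfl⟩, h1⟩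
  have hyx : y = x := by
    obtain ⟨c, ⟨_, hc⟩, hcx⟩ := (hΦ.1 y (b, g⁻¹, a) (a, g, b) x).mpr ⟨z, h, hy1⟩
    have hc1 : c = ((b, (1 : G), b) : E × G × E) := by
      have hc' : c = ((b, g⁻¹ * g, b) : E × G × E) := hc
      rwa [inv_mul_cancel] at hc'
    rw [hc1] at hcx
    exact act_unit_eq hΦ hρ hcx
  rw [← hyx]; exact hy1

theorem act_det {z z' x : Z} {a : E} {g : G} {b : E}
    (h : Φ z ((a, g, b), x)) (h' : Φ z' ((a, g, b), x)) : z = z' := by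
  have hi := act_inv hΦ hρ h
  obtain ⟨c, ⟨_, hc⟩, hcx⟩ := (hΦ.1 z' (a, g, b) (b, g⁻¹, a) z).mpr ⟨x, hi, h'⟩
  have hc1 : c = ((a, (1 : G), a) : E × G × E) := by
    have hc' : c = ((a, g * g⁻¹, a) : E × G × E) := hc
    rwa [mul_inv_cancel] at hc'
  rw [hc1] at hcx
  exact (act_unit_eq hΦ hρ hcx).symm

theorem act_cancel {z x x' : Z} {a : E} {g : G} {b : E}
    (h : Φ z ((a, g, b), x)) (h' : Φ z ((a, g, b), x')) : x = x' :=
  act_det hΦ hρ (act_inv hΦ hρ h) (act_inv hΦ hρ h')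

theorem act_comp {z y x : Z} {a : E} {g : G} {b : E} {h : G} {c : E}
    (h1 : Φ y ((b, h, c), x)) (h2 : Φ z ((a, g, b), y)) : Φ z ((a, g * h, c), x) := by
  obtain ⟨w, ⟨_, hw⟩, hwx⟩ := (hΦ.1 z (a, g, b) (b, h, c) x).mpr ⟨y, h1, h2⟩
  have hw' : w = ((a, g * h, c) : E × G × E) := hw
  rwa [hw'] at hwx

theorem act_decomp {z x : Z} (a : E) (g : G) (b : E) (h : G) (c : E)
    (hz : Φ z ((a, g * h, c), x)) : ∃ y, Φ y ((b, h, c), x) ∧ Φ z ((a, g, b), y) :=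
  (hΦ.1 z (a, g, b) (b, h, c) x).mp ⟨(a, g * h, c), ⟨rfl, rfl⟩, hz⟩

end ActHelpers

/-- Every action of the transitive groupoid `E × G × E` on a set `Z` is,
up to an equivariant bijection `Ψ(e,z̃) = Φ((e,1,e₀), z̃)`, the action on
`E × Z̃` induced from the `G`-action `g·z̃ = Φ((e₀,g,e₀), z̃)` on the fiber
`Z̃ = ρ⁻¹(e₀)`, where `e₀ = ρ z₀` for a chosen `z₀ ∈ Z`. -/
theorem stmt_19 {E G Z : Type*} [Group G]
    (Φ : Z → (E × G × E) × Z → Prop)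
    (hΦ : IsActionRel (prodGpd E G) Φ)
    (ρ : Z → E) (hρ : ∀ z, Φ z ((ρ z, 1, ρ z), z))
    (z₀ : Z) :
    -- Ψ is a bijection from `E × Z̃` (pairs `(e, x)` with `ρ x = ρ z₀`) to `Z`
    ((∀ e (x : Z), ρ x = ρ z₀ → ∃! z, Φ z ((e, (1 : G), ρ z₀), x)) ∧
     (∀ z : Z, ∃! p : E × Z, ρ p.2 = ρ z₀ ∧ Φ z ((p.1, (1 : G), ρ z₀), p.2))) ∧
    -- Ψ is equivariant: `Φ(id × Ψ) = Ψ ∘ Φ̃`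
    (∀ (z : Z) (e₁ : E) (g : G) (e₂ e₃ : E) (x : Z), ρ x = ρ z₀ →
      ((∃ z', Φ z' ((e₃, (1 : G), ρ z₀), x) ∧ Φ z ((e₁, g, e₂), z')) ↔
       (e₂ = e₃ ∧ ∃ x', Φ x' ((ρ z₀, g, ρ z₀), x) ∧
          Φ z ((e₁, (1 : G), ρ z₀), x')))) := by
  refine ⟨⟨?_, ?_⟩, ?_⟩
  · intro e x hx
    obtain ⟨z, hz⟩ := act_exists hΦ hρ e (1 : G) x
    rw [hx] at hz
    exact ⟨z, hz, fun z' hz' => act_det hΦ hρ hz' hz⟩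
  · intro z
    obtain ⟨x, hx⟩ := act_exists hΦ hρ (ρ z₀) (1 : G) z
    have hxρ : ρ x = ρ z₀ := act_src hΦ hρ hx
    have hinv : Φ z ((ρ z, (1 : G)⁻¹, ρ z₀), x) := act_inv hΦ hρ hx
    rw [inv_one] at hinv
    refine ⟨(ρ z, x), ⟨hxρ, hinv⟩, ?_⟩
    rintro ⟨e, y⟩ ⟨hyρ, hy⟩
    have he : e = ρ z := (act_src hΦ hρ hy).symm
    subst he
    have : y = x := act_cancel hΦ hρ hy hinv
    rw [this]
  · intro z e₁ g e₂ e₃ x hx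
    constructor
    · rintro ⟨z', h1, h2⟩
      have he : e₂ = e₃ := by
        rw [← act_tgt hΦ hρ h2, act_src hΦ hρ h1]
      subst he
      have hcomp : Φ z ((e₁, g * 1, ρ z₀), x) := act_comp hΦ hρ h1 h2
      rw [mul_one] at hcomp
      have hcomp' : Φ z ((e₁, (1 : G) * g, ρ z₀), x) := by rwa [one_mul]
      obtain ⟨x', hx1, hx2⟩ := act_decomp hΦ hρ e₁ (1 : G) (ρ z₀) g (ρ z₀) hcomp'
      exact ⟨rfl, x', hx1, hx2⟩
    · rintro ⟨he, x', hx1, hx2⟩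
      subst he
      have hcomp : Φ z ((e₁, (1 : G) * g, ρ z₀), x) := act_comp hΦ hρ hx1 hx2
      rw [one_mul] at hcomp
      have hcomp' : Φ z ((e₁, g * 1, ρ z₀), x) := by rwa [mul_one]
      obtain ⟨z', h1, h2⟩ := act_decomp hΦ hρ e₁ g e₂ (1 : G) (ρ z₀) hcomp'
      exact ⟨z', h1, h2⟩
end
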